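/- If the coefficient sequences a^{(α)} and a^{(-α)} satisfy (∑ a_n^{(α)} t^n/[n]_q!)(∑ a_n^{(-α)} t^n/[n]_q!) = 1 as formal power series, then R_n(x,y;u|q) = ∑_{k=0}^n [n choose k]_q P_{k,q}^{(α)}(x) P_{n-k,q}^{(-α)}(y;u), where R_n(x,y;u|q) = ∑_{j=0}^n [n choose j]_q u^{C(n-j,2)} x^j y^{n-j}. -/

import Mathlib

open Finset

def qNum {K : Type*} [Field K] (q : K) (n : ℕ) : K := ∑ i ∈ Finset.range n, q ^ i

def qFact {K : Type*} [Field K] (q : K) : ℕ → K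
  | 0 => 1
  | n + 1 => qFact q n * qNum q (n + 1)

def qBinom {K : Type*} [Field K] (q : K) (n k : ℕ) : K :=
  qFact q n / (qFact q k * qFact q (n - k))

/-!
Sending a sequence `f` to its q-exponential generating function `∑ f n tⁿ / [n]_q!` turns the
q-binomial convolution `∑ₖ [n choose k]_q f k g (n - k)` into the product of power series, and is
injective when no `[n]_q` vanishes. The determining sequences of `P^{(α)}` and `P^{(-α)}` then have
mutually inverse series `A` and `B`, and the sequences `xⁿ` and `u^{C(n,2)} yⁿ` have series `X` and
`Y` whose product is the series of `R_n`; the theorem is the identity `(A X) (B Y) = X Y`.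
-/

section

variable {K : Type*} [Field K] {q : K}

theorem qFact_ne_zero (hq : ∀ n : ℕ, 0 < n → qNum q n ≠ 0) (n : ℕ) : qFact q n ≠ 0 := by
  induction n with
  | zero => simp [qFact]
  | succ n ih => exact mul_ne_zero ih (hq _ n.succ_pos)

variable (q) in
def qConv (f g : ℕ → K) (n : ℕ) : K :=
  ∑ k ∈ range (n + 1), qBinom q n k * f k * g (n - k)

variable (q) in
noncomputable def qEGF (f : ℕ → K) : PowerSeries K :=
  PowerSeries.mk fun n => f n / qFact q n

theorem qEGF_injective (hq : ∀ n : ℕ, 0 < n → qNum q n ≠ 0) :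
    Function.Injective (qEGF q) := by
  intro f g h
  funext n
  have hn := congrArg (PowerSeries.coeff n) h
  simp only [qEGF, PowerSeries.coeff_mk] at hn
  exact (div_left_inj' (qFact_ne_zero hq n)).mp hn

theorem qEGF_qConv (hq : ∀ n : ℕ, 0 < n → qNum q n ≠ 0) (f g : ℕ → K) :
    qEGF q (qConv q f g) = qEGF q f * qEGF q g := by
  ext n
  simp only [qEGF, qConv, PowerSeries.coeff_mk, PowerSeries.coeff_mul,
    Nat.sum_antidiagonal_eq_sum_range_succ_mk, sum_div]
  refine sum_congr rfl fun k _ => ?_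
  have hF := qFact_ne_zero hq
  rw [qBinom]
  field_simp
  rw [mul_assoc (qFact q n), mul_assoc (qFact q n), mul_div_mul_left _ _ (hF n)]

theorem qEGF_delta : qEGF q (fun n => if n = 0 then (1 : K) else 0) = 1 := by
  ext n
  rcases n with _ | n <;> simp [qEGF, qFact, PowerSeries.coeff_one]

theorem qConv_qConv_qConv_of_qConv_eq_delta (hq : ∀ n : ℕ, 0 < n → qNum q n ≠ 0)
    {a b : ℕ → K} (hab : qConv q a b = fun n => if n = 0 then 1 else 0) (f g : ℕ → K) :
    qConv q (qConv q a f) (qConv q b g) = qConv q f g := by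
  have hAB : qEGF q a * qEGF q b = 1 := by rw [← qEGF_qConv hq, hab, qEGF_delta]
  apply qEGF_injective hq
  simp only [qEGF_qConv hq]
  linear_combination (qEGF q f * qEGF q g) * hAB

end

/-- If the determining sequences of orders α and -α are convolution-inverse, then
R_n(x,y;u|q) = ∑_{k=0}^n [n,k]_q P_k^{(α)}(x) P_{n-k}^{(-α)}(y;u). -/
theorem deformed_homog_as_qAppell_product {K : Type*} [Field K] (q u : K)
    (hq : ∀ n : ℕ, 0 < n → qNum q n ≠ 0)
    (a b : ℕ → K)
    (hconv : ∀ n : ℕ,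
      (∑ k ∈ Finset.range (n + 1), qBinom q n k * a k * b (n - k)) =
        if n = 0 then 1 else 0) :
    ∀ (n : ℕ) (x y : K),
      (∑ j ∈ Finset.range (n + 1),
          qBinom q n j * u ^ ((n - j).choose 2) * x ^ j * y ^ (n - j)) =
        ∑ k ∈ Finset.range (n + 1), qBinom q n k *
          (∑ j ∈ Finset.range (k + 1), qBinom q k j * a j * x ^ (k - j)) *
          (∑ j ∈ Finset.range (n - k + 1),
            qBinom q (n - k) j * u ^ ((n - k - j).choose 2) * b j * y ^ (n - k - j)) := by
  intro n x y
  have key := congrFun (qConv_qConv_qConv_of_qConv_eq_delta hq (funext hconv)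
    (fun m => x ^ m) (fun m => u ^ m.choose 2 * y ^ m)) n
  simp only [qConv] at key
  convert key.symm using 1
  · exact sum_congr rfl fun j _ => by ring
  · exact sum_congr rfl fun k _ => congrArg _ (sum_congr rfl fun j _ => by ring)
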